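/- arXiv:1310.8622 — 2 statements merged into one kernel-verified Lean document; each statement's English description precedes it below -/
import Mathlib

section
/- Let p be a Silver condition, n ∈ ℕ, and B ⊆ 2^ℕ a Borel set. Then there exists a Silver condition q ≤ₙ p such that [q] ∩ B is clopen in the subspace [q]. -/
open Set

/-- The domain of a condition, viewed as a set of pairs. -/
def sDom (p : Set (ℕ × Bool)) : Set ℕ := {n | ∃ b, (n, b) ∈ p}

/-- A Silver condition: a partial function `ℕ → {0,1}` (coded as a functional set of pairs)
whose domain has infinite complement. -/
def IsSilver (p : Set (ℕ × Bool)) : Prop :=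
  (∀ ⦃n : ℕ⦄ ⦃b b' : Bool⦄, (n, b) ∈ p → (n, b') ∈ p → b = b') ∧ ((sDom p)ᶜ).Infinite

/-- `q ≤ₙ p`: `q` extends `p` and the first `n` elements of `ℕ ∖ dom(q)` coincide with the
first `n` elements of `ℕ ∖ dom(p)`. -/
def SLEn (n : ℕ) (q p : Set (ℕ × Bool)) : Prop :=
  p ⊆ q ∧ ∀ i < n, Nat.nth (· ∈ (sDom q)ᶜ) i = Nat.nth (· ∈ (sDom p)ᶜ) i

/-- `q ≤ₙ* p`: `q ≤ₙ p` and `q` is identically zero on `dom(q) ∖ dom(p)`. -/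
def SLEnStar (n : ℕ) (q p : Set (ℕ × Bool)) : Prop :=
  SLEn n q p ∧ ∀ k ∈ sDom q \ sDom p, (k, true) ∉ q

/-- `[p] = {x ∈ 2^ℕ : p ⊆ x}`. -/
def cyl (p : Set (ℕ × Bool)) : Set (ℕ → Bool) := {x | ∀ ⦃n : ℕ⦄ ⦃b : Bool⦄, (n, b) ∈ p → x n = b}

/-- `Q⁰(p)`: the elements of `[p]` that are `0` at all but finitely many coordinates outside
`dom(p)`. -/
def Qzero (p : Set (ℕ × Bool)) : Set (ℕ → Bool) :=
  {x ∈ cyl p | {k | k ∈ (sDom p)ᶜ ∧ x k = true}.Finite}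

/-- An ω-cover of a subset `Q` of `2^ℕ`: a family of open subsets of `2^ℕ`, none containing
`Q`, such that every finite subset of `Q` is contained in some member. -/
def IsOmegaCoverOf (Q : Set (ℕ → Bool)) (𝒰 : Set (Set (ℕ → Bool))) : Prop :=
  (∀ U ∈ 𝒰, IsOpen U) ∧ (∀ U ∈ 𝒰, ¬ Q ⊆ U) ∧ ∀ F ⊆ Q, F.Finite → ∃ U ∈ 𝒰, F ⊆ U

noncomputable def hN (q : Set (ℕ × Bool)) (i : ℕ) : ℕ := Nat.nth (· ∈ (sDom q)ᶜ) i

lemma nth_eq_of_between {P Q : ℕ → Prop} (hP : (setOf P).Infinite)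
    (hQP : ∀ k, Q k → P k) {n : ℕ} (hn : ∀ i < n, Q (Nat.nth P i)) :
    ∀ i < n, Nat.nth Q i = Nat.nth P i := by
  classical
  intro i hi
  have ha : Q (Nat.nth P i) := hn i hi
  have hcount : Nat.count Q (Nat.nth P i) = Nat.count P (Nat.nth P i) := by
    rw [Nat.count_eq_card_filter_range, Nat.count_eq_card_filter_range]
    congr 1
    apply Finset.filter_congr
    intro k hk
    simp only [Finset.mem_range] at hk
    constructor
    · exact fun h => hQP k h
    · intro hPk
      have h1 : Nat.count P (k + 1) ≤ Nat.count P (Nat.nth P i) :=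
        Nat.count_monotone P hk
      rw [Nat.count_nth_of_infinite hP] at h1
      rw [Nat.count_succ, if_pos hPk] at h1
      have hk2 : Nat.count P k < i := h1
      have hkeq : Nat.nth P (Nat.count P k) = k := Nat.nth_count hPk
      rw [← hkeq]
      exact hn _ (hk2.trans hi)
  have h2 : Nat.nth Q (Nat.count Q (Nat.nth P i)) = Nat.nth P i := Nat.nth_count ha
  rwa [hcount, Nat.count_nth_of_infinite hP] at h2

lemma sDom_mono {p q : Set (ℕ × Bool)} (h : p ⊆ q) : sDom p ⊆ sDom q :=
  fun _ ⟨b, hb⟩ => ⟨b, h hb⟩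

lemma hN_notMem {q : Set (ℕ × Bool)} (hq : ((sDom q)ᶜ).Infinite) (i : ℕ) :
    hN q i ∉ sDom q :=
  Nat.nth_mem_of_infinite (p := (· ∈ (sDom q)ᶜ)) hq i

lemma slen_of_subset {p q : Set (ℕ × Bool)} (hpq : p ⊆ q)
    (hp : ((sDom p)ᶜ).Infinite) (n : ℕ)
    (h : ∀ i < n, hN p i ∉ sDom q) : SLEn n q p := by
  refine ⟨hpq, ?_⟩
  exact nth_eq_of_between (P := (· ∈ (sDom p)ᶜ)) (Q := (· ∈ (sDom q)ᶜ)) hp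
    (fun k hk hkp => hk (sDom_mono hpq hkp)) h

lemma slen_refl (n : ℕ) (q : Set (ℕ × Bool)) : SLEn n q q := ⟨subset_rfl, fun _ _ => rfl⟩

lemma slen_trans {n : ℕ} {q r p : Set (ℕ × Bool)} (h1 : SLEn n q r) (h2 : SLEn n r p) :
    SLEn n q p :=
  ⟨h2.1.trans h1.1, fun i hi => (h1.2 i hi).trans (h2.2 i hi)⟩

lemma slen_mono {m n : ℕ} (h : m ≤ n) {q p : Set (ℕ × Bool)} (hle : SLEn n q p) :
    SLEn m q p := ⟨hle.1, fun i hi => hle.2 i (hi.trans_le h)⟩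

lemma slen_hN {n : ℕ} {q p : Set (ℕ × Bool)} (h : SLEn n q p) :
    ∀ i < n, hN q i = hN p i := h.2

lemma cyl_anti {p q : Set (ℕ × Bool)} (h : p ⊆ q) : cyl q ⊆ cyl p :=
  fun _ hx _ _ hb => hx (h hb)

def extC (q : Set (ℕ × Bool)) (t : ℕ) (s : ℕ → Bool) : Set (ℕ × Bool) :=
  q ∪ {z | ∃ i < t, z = (hN q i, s i)}

lemma mem_cyl_extC {q : Set (ℕ × Bool)} {t : ℕ} {s : ℕ → Bool} {x : ℕ → Bool} :
    x ∈ cyl (extC q t s) ↔ x ∈ cyl q ∧ ∀ i < t, x (hN q i) = s i := by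
  constructor
  · intro h
    exact ⟨fun n b hb => h (Or.inl hb), fun i hi => h (Or.inr ⟨i, hi, rfl⟩)⟩
  · rintro ⟨h1, h2⟩ n b hb
    rcases hb with hb | ⟨i, hi, hz⟩
    · exact h1 hb
    · obtain ⟨hn, hb⟩ := Prod.mk.injEq .. ▸ hz
      subst hn; subst hb; exact h2 i hi

lemma extC_mono {q q' : Set (ℕ × Bool)} {t : ℕ} {s : ℕ → Bool} (hsub : q ⊆ q')
    (hh : ∀ i < t, hN q' i = hN q i) : extC q t s ⊆ extC q' t s := by
  rintro z (hz | ⟨i, hi, rfl⟩)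
  · exact Or.inl (hsub hz)
  · exact Or.inr ⟨i, hi, by rw [hh i hi]⟩

lemma extC_congr {q : Set (ℕ × Bool)} {t : ℕ} {s s' : ℕ → Bool}
    (h : ∀ i < t, s i = s' i) : extC q t s = extC q t s' := by
  unfold extC
  congr 1
  ext z
  constructor <;> rintro ⟨i, hi, rfl⟩ <;> exact ⟨i, hi, by rw [h i hi]⟩

def Dec (B : Set (ℕ → Bool)) (q : Set (ℕ × Bool)) (t : ℕ) : Prop :=
  ∀ s : ℕ → Bool, cyl (extC q t s) ⊆ B ∨ cyl (extC q t s) ∩ B = ∅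

lemma dec1_mono {B : Set (ℕ → Bool)} {q q' : Set (ℕ × Bool)} {n : ℕ} {s : ℕ → Bool}
    (h : SLEn n q' q)
    (hd : cyl (extC q n s) ⊆ B ∨ cyl (extC q n s) ∩ B = ∅) :
    cyl (extC q' n s) ⊆ B ∨ cyl (extC q' n s) ∩ B = ∅ := by
  have hsub : cyl (extC q' n s) ⊆ cyl (extC q n s) := cyl_anti (extC_mono h.1 h.2)
  rcases hd with h1 | h1
  · exact Or.inl (hsub.trans h1)
  · exact Or.inr (eq_empty_of_subset_empty (h1 ▸ inter_subset_inter_left B hsub))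

lemma isClopen_pattern (g : ℕ → ℕ) (s : ℕ → Bool) (t : ℕ) :
    IsClopen {x : ℕ → Bool | ∀ i < t, x (g i) = s i} := by
  have heq : {x : ℕ → Bool | ∀ i < t, x (g i) = s i}
      = ⋂ i ∈ Finset.range t, (fun x : ℕ → Bool => x (g i)) ⁻¹' {s i} := by
    ext x; simp [Finset.mem_range]
  rw [heq]
  exact isClopen_biInter_finset fun i _ =>
    (isClopen_discrete {s i}).preimage (continuous_apply (g i))

lemma exists_basic {B : Set (ℕ → Bool)} (hB : IsOpen B) {x : ℕ → Bool} (hx : x ∈ B) :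
    ∃ I : Set ℕ, I.Finite ∧ {y : ℕ → Bool | ∀ k ∈ I, y k = x k} ⊆ B := by
  have hmem : B ∈ nhds x := hB.mem_nhds hx
  rw [nhds_pi, Filter.mem_pi] at hmem
  obtain ⟨I, hIfin, t, ht, hsub⟩ := hmem
  refine ⟨I, hIfin, fun y hy => hsub ?_⟩
  intro k hk
  have hxk : x k ∈ t k := mem_of_mem_nhds (ht k)
  rw [hy k hk]
  exact hxk

lemma open_step {B : Set (ℕ → Bool)} (hB : IsOpen B) {q : Set (ℕ × Bool)} (hq : IsSilver q)
    (n : ℕ) (s : ℕ → Bool) :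
    ∃ q', IsSilver q' ∧ SLEn n q' q ∧
      (cyl (extC q' n s) ⊆ B ∨ cyl (extC q' n s) ∩ B = ∅) := by
  by_cases hx : ∃ x, x ∈ cyl (extC q n s) ∩ B
  · obtain ⟨x, hxc, hxB⟩ := hx
    obtain ⟨I, hIfin, hIsub⟩ := exists_basic hB hxB
    rw [mem_cyl_extC] at hxc
    set q' := q ∪ {z : ℕ × Bool |
      z.1 ∈ I ∧ z.1 ∉ sDom q ∧ (∀ i < n, z.1 ≠ hN q i) ∧ z.2 = x z.1} with hq'def
    have hsub : q ⊆ q' := subset_union_left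
    have hdomsub : sDom q' ⊆ sDom q ∪ I := by
      rintro k ⟨b, hb | hb⟩
      · exact Or.inl ⟨b, hb⟩
      · exact Or.inr hb.1
    have hinf : ((sDom q')ᶜ).Infinite := by
      apply (hq.2.diff hIfin).mono
      intro k hk hk'
      rcases hdomsub hk' with h | h
      · exact hk.1 h
      · exact hk.2 h
    have hfun : ∀ ⦃m : ℕ⦄ ⦃b b' : Bool⦄, (m, b) ∈ q' → (m, b') ∈ q' → b = b' := by
      rintro m b b' (hb | hb) (hb' | hb')
      · exact hq.1 hb hb'
      · exact absurd ⟨b, hb⟩ hb'.2.1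
      · exact absurd ⟨b', hb'⟩ hb.2.1
      · simp only [Set.mem_setOf_eq] at hb hb'
        rw [hb.2.2.2, hb'.2.2.2]
    have hq'S : IsSilver q' := ⟨hfun, hinf⟩
    have hle : SLEn n q' q := by
      apply slen_of_subset hsub hq.2
      intro i hi
      rintro ⟨b, hb | hb⟩
      · exact hN_notMem hq.2 i ⟨b, hb⟩
      · exact hb.2.2.1 i hi rfl
    refine ⟨q', hq'S, hle, Or.inl ?_⟩
    intro y hy
    rw [mem_cyl_extC] at hy
    apply hIsub
    intro k hk
    by_cases hk1 : k ∈ sDom q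
    · obtain ⟨b, hb⟩ := hk1
      rw [hy.1 (hsub hb), hxc.1 hb]
    · by_cases hk2 : ∃ i < n, k = hN q i
      · obtain ⟨i, hi, rfl⟩ := hk2
        rw [← slen_hN hle i hi, hy.2 i hi, slen_hN hle i hi, hxc.2 i hi]
      · push_neg at hk2
        have hmem : (k, x k) ∈ q' := Or.inr ⟨hk, hk1, hk2, rfl⟩
        exact hy.1 hmem
  · refine ⟨q, hq, slen_refl n q, Or.inr ?_⟩
    rw [eq_empty_iff_forall_notMem]
    exact fun y hy => hx ⟨y, hy⟩

def Pprop (B : Set (ℕ → Bool)) : Prop :=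
  ∀ q, IsSilver q → ∀ n, ∃ q', IsSilver q' ∧ SLEn n q' q ∧ Dec B q' n

lemma open_list {B : Set (ℕ → Bool)} (hB : IsOpen B) (n : ℕ) :
    ∀ (L : List (ℕ → Bool)) (q), IsSilver q →
      ∃ q', IsSilver q' ∧ SLEn n q' q ∧
        ∀ s ∈ L, cyl (extC q' n s) ⊆ B ∨ cyl (extC q' n s) ∩ B = ∅ := by
  intro L
  induction L with
  | nil => exact fun q hq => ⟨q, hq, slen_refl n q, by simp⟩
  | cons s L ih =>
    intro q hq
    obtain ⟨r, hr, hrq, hdec⟩ := open_step hB hq n s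
    obtain ⟨q', hq', hq'r, hdecL⟩ := ih r hr
    refine ⟨q', hq', slen_trans hq'r hrq, ?_⟩
    intro s' hs'
    rcases List.mem_cons.1 hs' with rfl | hs'
    · exact dec1_mono hq'r hdec
    · exact hdecL s' hs'

lemma P_open {B : Set (ℕ → Bool)} (hB : IsOpen B) : Pprop B := by
  intro q hq n
  classical
  set L : List (ℕ → Bool) :=
    ((Finset.univ : Finset (Fin n → Bool)).toList).map
      (fun f k => if h : k < n then f ⟨k, h⟩ else false) with hL
  obtain ⟨q', hq', hle, hdec⟩ := open_list hB n L q hq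
  refine ⟨q', hq', hle, ?_⟩
  intro s
  set s' : ℕ → Bool := fun k => if h : k < n then s k else false with hs'
  have hmem : s' ∈ L := by
    rw [hL]
    apply List.mem_map.2
    refine ⟨fun j => s j.1, Finset.mem_toList.2 (Finset.mem_univ _), ?_⟩
    funext k
    by_cases h : k < n <;> simp [hs', h]
  have hcongr : extC q' n s = extC q' n s' := by
    apply extC_congr
    intro i hi
    simp [hs', hi]
  rw [hcongr]
  exact hdec s' hmem

lemma P_empty : Pprop ∅ := by
  intro q hq n
  exact ⟨q, hq, slen_refl n q, fun s => Or.inr (inter_empty _)⟩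

lemma P_compl {B : Set (ℕ → Bool)} (h : Pprop B) : Pprop Bᶜ := by
  intro q hq n
  obtain ⟨q', hq', hle, hdec⟩ := h q hq n
  refine ⟨q', hq', hle, fun s => ?_⟩
  rcases hdec s with h1 | h1
  · refine Or.inr (eq_empty_iff_forall_notMem.2 fun y hy => hy.2 (h1 hy.1))
  · refine Or.inl fun y hy => fun hyB => ?_
    rw [eq_empty_iff_forall_notMem] at h1
    exact h1 y ⟨hy, hyB⟩

lemma P_iUnion {B : ℕ → Set (ℕ → Bool)} (hm : ∀ m, Pprop (B m)) : Pprop (⋃ m, B m) := by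
  intro p hp n
  classical
  have hm' : ∀ (m : ℕ) (q), IsSilver q → ∀ k, ∃ q',
      IsSilver q' ∧ SLEn k q' q ∧ Dec (B m) q' k := fun m => hm m
  choose! F hS hLE hDec using hm'
  set c : ℕ → Set (ℕ × Bool) := fun m => Nat.rec p (fun m r => F m r (n + m + 1)) m with hcdef
  have hc0 : c 0 = p := rfl
  have hcs : ∀ m, c (m + 1) = F m (c m) (n + m + 1) := fun m => rfl
  have hCs : ∀ m, IsSilver (c m) := by
    intro m
    induction m with
    | zero => exact hp
    | succ m ih => exact (hS m (c m) ih (n + m + 1))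
  have hLE' : ∀ m, SLEn (n + m + 1) (c (m + 1)) (c m) := fun m => hLE m (c m) (hCs m) _
  have hDec' : ∀ m, Dec (B m) (c (m + 1)) (n + m + 1) := fun m => hDec m (c m) (hCs m) _
  have hchain : ∀ m m', m ≤ m' → SLEn (n + m + 1) (c m') (c m) := by
    intro m m' h
    induction h with
    | refl => exact slen_refl _ _
    | @step m'' h ih =>
        have hmle : m ≤ m'' := h
        exact slen_trans (slen_mono (by omega) (hLE' m'')) ih
  set A : ℕ → ℕ := fun i => hN (c i) i with hAdef
  have hstab : ∀ m i, i < n + m + 1 → hN (c m) i = A i := by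
    intro m i hi
    have h1 : hN (c (max m i)) i = hN (c m) i :=
      slen_hN (hchain m (max m i) (le_max_left m i)) i hi
    have h2 : hN (c (max m i)) i = hN (c i) i :=
      slen_hN (hchain i (max m i) (le_max_right m i)) i (by omega)
    rw [← h1, h2]
  set Q : Set (ℕ × Bool) := ⋃ m, c m with hQdef
  have hcQ : ∀ m, c m ⊆ Q := fun m => subset_iUnion c m
  have hAnot : ∀ i m, A i ∉ sDom (c m) := by
    intro i m
    have h1 : A i ∉ sDom (c (max i m)) := by
      rw [← hstab (max i m) i (by have := le_max_left i m; omega)]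
      exact hN_notMem (hCs _).2 i
    intro h
    exact h1 (sDom_mono (hchain m (max i m) (le_max_right i m)).1 h)
  have hAnotQ : ∀ i, A i ∉ sDom Q := by
    rintro i ⟨b, hb⟩
    rw [hQdef, mem_iUnion] at hb
    obtain ⟨m, hbm⟩ := hb
    exact hAnot i m ⟨b, hbm⟩
  have hQS : IsSilver Q := by
    constructor
    · intro k b b' hb hb'
      rw [hQdef, mem_iUnion] at hb hb'
      obtain ⟨m1, hb⟩ := hb
      obtain ⟨m2, hb'⟩ := hb'
      exact (hCs (max m1 m2)).1
        ((hchain m1 (max m1 m2) (le_max_left m1 m2)).1 hb)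
        ((hchain m2 (max m1 m2) (le_max_right m1 m2)).1 hb')
    · apply Set.infinite_of_injective_forall_mem (f := A)
      · have hsm : StrictMono A := by
          intro i j hij
          have h1 : A i = hN (c j) i := (hstab j i (by omega)).symm
          have h2 : A j = hN (c j) j := rfl
          rw [h1, h2]
          exact (Nat.nth_lt_nth (hCs j).2).2 hij
        exact hsm.injective
      · exact hAnotQ
  have hQle : ∀ m, SLEn (n + m + 1) Q (c m) := by
    intro m
    apply slen_of_subset (hcQ m) (hCs m).2
    intro i hi
    rw [hstab m i hi]
    exact hAnotQ i
  set U : Set (ℕ → Bool) := ⋃ m, ⋃ s ∈ {s : ℕ → Bool | cyl (extC (c (m + 1)) (n + m + 1) s) ⊆ B m},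
      {x : ℕ → Bool | ∀ i < n + m + 1, x (hN (c (m + 1)) i) = s i} with hUdef
  have hUopen : IsOpen U :=
    isOpen_iUnion fun m => isOpen_biUnion fun s _ => (isClopen_pattern _ s _).2
  have h1 : ∀ x ∈ cyl Q, x ∈ U → x ∈ ⋃ m, B m := by
    intro x hxQ hxU
    rw [hUdef] at hxU
    simp only [mem_iUnion, mem_setOf_eq] at hxU
    obtain ⟨m, s, hs, hxp⟩ := hxU
    have hxc : x ∈ cyl (c (m + 1)) := cyl_anti (hcQ (m + 1)) hxQ
    exact mem_iUnion.2 ⟨m, hs (mem_cyl_extC.2 ⟨hxc, hxp⟩)⟩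
  have h2 : ∀ x ∈ cyl Q, x ∈ (⋃ m, B m) → x ∈ U := by
    intro x hxQ hxB
    obtain ⟨m, hxm⟩ := mem_iUnion.1 hxB
    set s : ℕ → Bool := fun i => x (hN (c (m + 1)) i) with hsdef
    have hxc : x ∈ cyl (extC (c (m + 1)) (n + m + 1) s) :=
      mem_cyl_extC.2 ⟨cyl_anti (hcQ (m + 1)) hxQ, fun i _ => rfl⟩
    rcases hDec' m s with hgood | hbad
    · rw [hUdef]
      exact mem_iUnion.2 ⟨m, mem_biUnion hgood (fun i _ => rfl)⟩
    · have := mem_inter hxc hxm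
      rw [hbad] at this
      exact this.elim
  obtain ⟨q', hq'S, hq'le, hq'dec⟩ := P_open hUopen Q hQS n
  refine ⟨q', hq'S, slen_trans hq'le (slen_mono (by omega) (hQle 0)), ?_⟩
  intro s
  have hsubQ : cyl (extC q' n s) ⊆ cyl Q :=
    (cyl_anti (subset_union_left)).trans (cyl_anti hq'le.1)
  rcases hq'dec s with h | h
  · exact Or.inl fun y hy => h1 y (hsubQ hy) (h hy)
  · refine Or.inr (eq_empty_iff_forall_notMem.2 fun y hy => ?_)
    rw [eq_empty_iff_forall_notMem] at h
    exact h y ⟨hy.1, h2 y (hsubQ hy.1) hy.2⟩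

lemma P_all {B : Set (ℕ → Bool)}
    (hB : @MeasurableSet (ℕ → Bool) (borel (ℕ → Bool)) B) : Pprop B := by
  have hB' : @MeasurableSet (ℕ → Bool)
      (MeasurableSpace.generateFrom {s : Set (ℕ → Bool) | IsOpen s}) B := hB
  exact MeasurableSpace.generateFrom_induction {s : Set (ℕ → Bool) | IsOpen s}
    (fun s _ => Pprop s) (fun t ht _ => P_open ht) P_empty
    (fun t _ ht => P_compl ht) (fun f _ hf => P_iUnion hf) B hB'


/-- For a Silver condition `p`, `n ∈ ℕ`, and a Borel set `B ⊆ 2^ℕ`, there is `q ≤ₙ p` such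
that `[q] ∩ B` is clopen in the subspace `[q]`. -/
theorem stmt16 (p : Set (ℕ × Bool)) (hp : IsSilver p) (n : ℕ)
    (B : Set (ℕ → Bool)) (hB : @MeasurableSet (ℕ → Bool) (borel (ℕ → Bool)) B) :
    ∃ q, IsSilver q ∧ SLEn n q p ∧
      IsClopen (Subtype.val ⁻¹' B : Set ↥(cyl q)) := by
  obtain ⟨q, hqS, hqle, hdec⟩ := P_all hB p hp n
  refine ⟨q, hqS, hqle, ?_⟩
  classical
  set U : Set (ℕ → Bool) := ⋃ s ∈ {s : ℕ → Bool | cyl (extC q n s) ⊆ B},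
      {x : ℕ → Bool | ∀ i < n, x (hN q i) = s i} with hUdef
  set V : Set (ℕ → Bool) := ⋃ s ∈ {s : ℕ → Bool | cyl (extC q n s) ∩ B = ∅},
      {x : ℕ → Bool | ∀ i < n, x (hN q i) = s i} with hVdef
  have hUopen : IsOpen U := isOpen_biUnion fun s _ => (isClopen_pattern _ s _).2
  have hVopen : IsOpen V := isOpen_biUnion fun s _ => (isClopen_pattern _ s _).2
  have heqU : (Subtype.val ⁻¹' B : Set ↥(cyl q)) = Subtype.val ⁻¹' U := by
    ext ⟨x, hx⟩
    simp only [mem_preimage]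
    constructor
    · intro hxB
      have hxe : x ∈ cyl (extC q n (fun i => x (hN q i))) :=
        mem_cyl_extC.2 ⟨hx, fun i _ => rfl⟩
      rcases hdec (fun i => x (hN q i)) with h | h
      · exact mem_biUnion h (fun i _ => rfl)
      · have := mem_inter hxe hxB
        rw [h] at this
        exact this.elim
    · intro hxU
      simp only [hUdef, mem_iUnion, mem_setOf_eq] at hxU
      obtain ⟨s, hs, hxp⟩ := hxU
      exact hs (mem_cyl_extC.2 ⟨hx, hxp⟩)
  have heqV : (Subtype.val ⁻¹' B : Set ↥(cyl q)) = (Subtype.val ⁻¹' V)ᶜ := by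
    ext ⟨x, hx⟩
    simp only [mem_preimage, mem_compl_iff]
    constructor
    · intro hxB hxV
      simp only [hVdef, mem_iUnion, mem_setOf_eq] at hxV
      obtain ⟨s, hs, hxp⟩ := hxV
      have hxe : x ∈ cyl (extC q n s) := mem_cyl_extC.2 ⟨hx, hxp⟩
      have := mem_inter hxe hxB
      rw [hs] at this
      exact this.elim
    · intro hxV
      rcases hdec (fun i => x (hN q i)) with h | h
      · exact h (mem_cyl_extC.2 ⟨hx, fun i _ => rfl⟩)
      · refine absurd ?_ hxV
        simp only [hVdef, mem_iUnion, mem_setOf_eq]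
        exact ⟨fun i => x (hN q i), h, fun i _ => rfl⟩
  constructor
  · rw [heqV]
    exact (hVopen.preimage continuous_subtype_val).isClosed_compl
  · rw [heqU]
    exact hUopen.preimage continuous_subtype_val
end

section
/- Let T ⊆ [ℕ]^∞ be an unbounded set (in particular, any unbounded tower). Then the space T ∪ Fin, regarded as a subspace of the Cantor space P(ℕ), does not satisfy S₁(B_Γ,B_Γ). -/
open Filter Set

universe u

/-- `[ℕ]^∞`: the family of (characteristic functions of) infinite subsets of `ℕ`. -/
def infSupp : Set (ℕ → Bool) := {x | {n | x n = true}.Infinite}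

/-- `Fin`: the family of (characteristic functions of) finite subsets of `ℕ`. -/
def finSupp : Set (ℕ → Bool) := {x | {n | x n = true}.Finite}

/-- `S₁(B_Γ,B_Γ)`: from every sequence of countable Borel γ-covers one can select single
members `B n` such that every point belongs to all but finitely many of them. -/
def SOneBGammaBGamma (Y : Type u) [TopologicalSpace Y] : Prop :=
  ∀ ℬ : ℕ → Set (Set Y),
    (∀ n, (ℬ n).Countable ∧ (ℬ n).Infinite ∧ (∀ B ∈ ℬ n, @MeasurableSet Y (borel Y) B) ∧
      (∀ B ∈ ℬ n, ¬ (Set.univ : Set Y) ⊆ B) ∧ ∀ y : Y, {B ∈ ℬ n | y ∉ B}.Finite) →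
    ∃ B : ℕ → Set Y, (∀ n, B n ∈ ℬ n) ∧ ∀ y : Y, ∀ᶠ n in atTop, y ∈ B n

open Function MeasureTheory

/-!
For a space `S ⊆ 2^ℕ` containing all finite sets, consider for each `n` the sets
`D n m = (Fin ∪ {x | x has at least n + 1 elements ≤ m}) \ {{m}}`.
Removing the point `{m}` keeps `D n m` a proper subset, while each finite set is missed by at most
one `D n m` and each infinite `x` lies in `D n m` as soon as `m` exceeds the `n`-th element of `x`.
So `{D n m | m ∈ ℕ}` is a countable Borel γ-cover of `S`, and a γ-selection `D n (g n)` forces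
the `n`-th element of every infinite `x ∈ S` to be eventually at most `g n`: the infinite members
of `S` are bounded.
-/

section GammaCover

variable {Y : Type*} [TopologicalSpace Y]

def IsCountableBorelGammaCover (ℬ : Set (Set Y)) : Prop :=
  ℬ.Countable ∧ ℬ.Infinite ∧ (∀ B ∈ ℬ, MeasurableSet[borel Y] B) ∧
    (∀ B ∈ ℬ, ¬ (univ : Set Y) ⊆ B) ∧ ∀ y : Y, {B ∈ ℬ | y ∉ B}.Finite

theorem IsCountableBorelGammaCover.range_diff_singleton [T1Space Y] {F : Set Y}
    {K : ℕ → Set Y} {e : ℕ → Y} (hF : MeasurableSet[borel Y] F)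
    (hK : ∀ m, MeasurableSet[borel Y] (K m)) (he : Injective e) (heF : ∀ m, e m ∈ F)
    (hK_eventually : ∀ y ∉ F, ∀ᶠ m in atTop, y ∈ K m) :
    IsCountableBorelGammaCover (range fun m => (F ∪ K m) \ {e m}) := by
  borelize Y
  set D := fun m => (F ∪ K m) \ {e m}
  have he_notMem : ∀ m, e m ∉ D m := fun m h => h.2 rfl
  have hD : Injective D := fun m m' h => by
    by_contra hne
    exact he_notMem m' (h ▸ ⟨.inl (heF m'), he.ne (Ne.symm hne)⟩)
  have hD_eventually : ∀ y, ∀ᶠ m in atTop, y ∈ D m := by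
    intro y
    have hne : ∀ᶠ m in atTop, y ≠ e m := by
      rw [← Nat.cofinite_eq_atTop]
      exact (he.tendsto_cofinite.eventually (eventually_cofinite_ne y)).mono fun _ h => h.symm
    by_cases hy : y ∈ F
    · filter_upwards [hne] with m hm using ⟨.inl hy, hm⟩
    · filter_upwards [hne, hK_eventually y hy] with m hm hKm using ⟨.inr hKm, hm⟩
  refine ⟨countable_range D, infinite_range_of_injective hD, ?_, ?_, fun y => ?_⟩
  · rintro _ ⟨m, rfl⟩
    exact (hF.union (hK m)).diff (measurableSet_singleton _)
  · rintro _ ⟨m, rfl⟩ h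
    exact he_notMem m (h (mem_univ _))
  · have hfin : {m | y ∉ D m}.Finite :=
      eventually_cofinite.1 (Nat.cofinite_eq_atTop ▸ hD_eventually y)
    refine (hfin.image D).subset ?_
    rintro _ ⟨⟨m, rfl⟩, hy⟩
    exact ⟨m, hy, rfl⟩

end GammaCover

theorem countable_finSupp : finSupp.Countable := by
  have hinj : Injective fun (x : ℕ → Bool) => {n | x n = true} := fun x x' h =>
    funext fun n => Bool.eq_iff_iff.2 (Set.ext_iff.1 h n)
  exact Countable.ofPred_finite.preimage hinj

theorem continuous_count_eq_true (m : ℕ) :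
    Continuous fun x : ℕ → Bool => Nat.count (fun k => x k = true) m := by
  induction m with
  | zero => exact continuous_const
  | succ m ih =>
    simp only [Nat.count_succ]
    have hite : Continuous fun b : Bool => if b = true then 1 else 0 :=
      continuous_of_discreteTopology
    exact ih.add (hite.comp (continuous_apply m))

theorem lt_count_eq_true_iff_nth_le {x : ℕ → Bool} (hx : x ∈ infSupp) {n m : ℕ} :
    n < Nat.count (fun k => x k = true) (m + 1) ↔ Nat.nth (fun k => x k = true) n ≤ m :=
  (Nat.lt_nth_iff_count_lt hx).trans Nat.lt_succ_iff

theorem exists_nth_le_of_sOneBGammaBGamma {S : Set (ℕ → Bool)} (hfin : finSupp ⊆ S)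
    (hS : SOneBGammaBGamma S) :
    ∃ g : ℕ → ℕ, ∀ x ∈ S ∩ infSupp,
      ∀ᶠ n in atTop, Nat.nth (fun k => x k = true) n ≤ g n := by
  borelize ↥S
  let e : ℕ → S := fun m => ⟨fun k => decide (k = m), hfin (by simp [finSupp])⟩
  let F : Set S := Subtype.val ⁻¹' finSupp
  let K : ℕ → ℕ → Set S := fun n m => {y | n < Nat.count (fun k => y.1 k = true) (m + 1)}
  have hcover : ∀ n, IsCountableBorelGammaCover (range fun m => (F ∪ K n m) \ {e m}) := by
    intro n
    refine .range_diff_singleton ((countable_finSupp.preimage Subtype.val_injective).measurableSet)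
      (fun m => (isOpen_lt continuous_const
        ((continuous_count_eq_true _).comp continuous_subtype_val)).measurableSet)
      (fun m m' h => by simpa [e] using congrFun (congrArg Subtype.val h) m)
      (fun m => by simp [e, F, finSupp]) (fun y hy => ?_)
    filter_upwards [eventually_ge_atTop (Nat.nth (fun k => y.1 k = true) n)] with m hm
    exact (lt_count_eq_true_iff_nth_le hy).2 hm
  obtain ⟨B, hB, hB_eventually⟩ := hS _ hcover
  choose g hg using hB
  refine ⟨g, fun x hx => ?_⟩
  filter_upwards [hB_eventually ⟨x, hx.1⟩] with n hn
  rw [← hg n] at hn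
  exact (lt_count_eq_true_iff_nth_le hx.2).1 (hn.1.resolve_left hx.2)

/-- If `T ⊆ [ℕ]^∞` is unbounded (with respect to eventual domination of increasing
enumerations), then the space `T ∪ Fin ⊆ 2^ℕ` does not satisfy `S₁(B_Γ,B_Γ)`. -/
theorem stmt19 (T : Set (ℕ → Bool)) (hT : T ⊆ infSupp)
    (hunb : ¬ ∃ g : ℕ → ℕ, ∀ x ∈ T,
      ∀ᶠ n in atTop, Nat.nth (fun k => x k = true) n ≤ g n) :
    ¬ SOneBGammaBGamma ↥(T ∪ finSupp) := fun hS =>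
  let ⟨g, hg⟩ := exists_nth_le_of_sOneBGammaBGamma subset_union_right hS
  hunb ⟨g, fun x hx => hg x ⟨.inl hx, hT hx⟩⟩
end
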